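/- arXiv:2603.10766 — 6 statements merged into one kernel-verified Lean document; each statement's English description precedes it below -/
import Mathlib

section
/- For every r ≥ 3 and any (not necessarily distinct) digraphs D_r, D'_r ∈ F_r^*, letting Q_{D_r⊍D'_r} = Q^L_{D_r} ⊍ Q^R_{D'_r}, there exists a 3-graph F that is Q_{D_r⊍D'_r}-colorable but not Q_{r−1}-colorable. -/
/-! Common definitions: digraphs, palettes, 3-graphs, uniform Turán density. -/

/-- A digraph on a vertex type `V`: an irreflexive arc relation. -/
structure Digr (V : Type) where
  Adj : V → V → Prop
  irrefl : ∀ v, ¬ Adj v v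

/-- `G.Contains D` : the digraph `G` has a subdigraph isomorphic to `D`,
i.e. there is an arc-preserving injection of `D` into `G`. -/
def Digr.Contains {V W : Type} (G : Digr V) (D : Digr W) : Prop :=
  ∃ f : W → V, Function.Injective f ∧ ∀ a b, D.Adj a b → G.Adj (f a) (f b)

/-- The number of arcs of a digraph on a finite vertex type. -/
noncomputable def Digr.arcCount {V : Type} [Fintype V] (D : Digr V) : ℕ :=
  {p : V × V | D.Adj p.1 p.2}.ncard

/-- The sum `D ⊕ D'` of two digraphs: disjoint union together with all arcs in
both directions between the two parts. -/
def Digr.sum {V W : Type} (D : Digr V) (D' : Digr W) : Digr (V ⊕ W) where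
  Adj x y :=
    match x, y with
    | Sum.inl a, Sum.inl b => D.Adj a b
    | Sum.inr a, Sum.inr b => D'.Adj a b
    | Sum.inl _, Sum.inr _ => True
    | Sum.inr _, Sum.inl _ => True
  irrefl := by
    rintro (a | a) h
    · exact D.irrefl a h
    · exact D'.irrefl a h

/-- A tournament: every pair of distinct vertices is joined by exactly one arc. -/
def IsTournament {V : Type} (D : Digr V) : Prop :=
  ∀ u v : V, u ≠ v → (D.Adj u v ↔ ¬ D.Adj v u)

/-- The transitive tournament on `r` vertices. -/
def transTournament (r : ℕ) : Digr (Fin r) :=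
  ⟨fun i j => i < j, fun v h => lt_irrefl v h⟩

/-- The directed triangle. -/
def cycle3 : Digr (Fin 3) := ⟨fun i j => j = i + 1, by decide⟩

/-- The one-vertex digraph (trivial tournament `T₁`). -/
def oneVertexDigr : Digr Unit := ⟨fun _ _ => False, fun _ h => h⟩

/-- The sum of a family of `s` digraphs, each on two vertices: disjoint union with
all arcs in both directions between distinct members of the family. -/
def sumFamily (s : ℕ) (T : Fin s → Digr (Fin 2)) : Digr (Fin s × Fin 2) where
  Adj x y := x.1 ≠ y.1 ∨ (x.1 = y.1 ∧ (T x.1).Adj x.2 y.2)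
  irrefl := by
    rintro ⟨i, a⟩ (h | ⟨-, h⟩)
    · exact h rfl
    · exact (T i).irrefl a h

/-- The Turán number `ex(n, K_r)` : the maximum number of edges of a `K_r`-free
simple graph on `n` vertices. -/
noncomputable def exK (n r : ℕ) : ℕ :=
  sSup {m | ∃ G : SimpleGraph (Fin n), G.CliqueFree r ∧ G.edgeSet.ncard = m}

/-- The digraph Turán number `ex(n, D)` : the maximum number of arcs of a `D`-free
digraph on `n` vertices. -/
noncomputable def exDigr {W : Type} (n : ℕ) (D : Digr W) : ℕ :=
  sSup {m | ∃ G : Digr (Fin n), ¬ G.Contains D ∧ G.arcCount = m}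

/-- An `r`-vertex digraph `D` is `r`-good if `ex(n, D) = 2 ex(n, K_r)` for all `n`
(membership in the family `𝓕_r`). -/
def IsGood {V : Type} [Fintype V] (r : ℕ) (D : Digr V) : Prop :=
  Fintype.card V = r ∧ ∀ n : ℕ, exDigr n D = 2 * exK n r

/-- Membership in `𝓕_r^*` : `r`-good and the underlying graph is `K_r`. -/
def IsGoodStar {V : Type} [Fintype V] (r : ℕ) (D : Digr V) : Prop :=
  IsGood r D ∧ ∀ u v : V, u ≠ v → D.Adj u v ∨ D.Adj v u

/-- `f(n, r) = 2 |E(T_{n,r})|`, twice the number of edges of the Turán graph, the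
complete `(r-1)`-partite graph on `n` vertices with balanced parts. -/
noncomputable def fTuran (n r : ℕ) : ℕ :=
  2 * (SimpleGraph.turanGraph n (r - 1)).edgeSet.ncard

/-- The bidirected Turán graph `↔T_{n,r}`. -/
def bidirTuran (n r : ℕ) : Digr (Fin n) :=
  ⟨fun i j => (SimpleGraph.turanGraph n (r - 1)).Adj i j,
   fun v h => (SimpleGraph.turanGraph n (r - 1)).loopless.irrefl v h⟩

/-- A palette: a set of admissible triples over a color type `C`. -/
structure Palette (C : Type) where
  A : Set (C × C × C)

/-- The density `d(P) = |A| / |C|³` of a palette. -/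
noncomputable def Palette.density {C : Type} [Fintype C] (P : Palette C) : ℝ :=
  (P.A.ncard : ℝ) / (Fintype.card C : ℝ) ^ 3

/-- The union `P₁ ⊍ P₂` of two palettes (on the disjoint union of color sets). -/
def Palette.union {C₁ C₂ : Type} (P₁ : Palette C₁) (P₂ : Palette C₂) :
    Palette (C₁ ⊕ C₂) :=
  ⟨{t | (∃ x y z, (x, y, z) ∈ P₁.A ∧ t = (Sum.inl x, Sum.inl y, Sum.inl z)) ∨
        (∃ x y z, (x, y, z) ∈ P₂.A ∧ t = (Sum.inr x, Sum.inr y, Sum.inr z))}⟩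

/-- The reverse `rev(P)` of a palette. -/
def Palette.rev {C : Type} (P : Palette C) : Palette C :=
  ⟨{t | (t.2.2, t.2.1, t.1) ∈ P.A}⟩

/-- `Subpalette P Q` : `P ⊆ Q`, i.e. there is a map of colors carrying admissible
triples of `P` to admissible triples of `Q`. -/
def Subpalette {C₁ C₂ : Type} (P : Palette C₁) (Q : Palette C₂) : Prop :=
  ∃ f : C₁ → C₂, ∀ t ∈ P.A, (f t.1, f t.2.1, f t.2.2) ∈ Q.A

/-- The left palette `Q^L_D` of a digraph `D`: colors `C₁ ⊔ C₁ × C₁`, admissible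
triples `(a, b, c_{ab})` for arcs `(a, b)` of `D`. -/
def leftPalette {C : Type} (D : Digr C) : Palette (C ⊕ C × C) :=
  ⟨{t | ∃ a b, D.Adj a b ∧ t = (Sum.inl a, Sum.inl b, Sum.inr (a, b))}⟩

/-- The right palette `Q^R_D` of a digraph `D`: colors `C₃ ⊔ C₃ × C₃`, admissible
triples `(c_{ab}, a, b)` for arcs `(a, b)` of `D`. -/
def rightPalette {C : Type} (D : Digr C) : Palette (C ⊕ C × C) :=
  ⟨{t | ∃ a b, D.Adj a b ∧ t = (Sum.inr (a, b), Sum.inl a, Sum.inl b)}⟩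

/-- The palette `Q_r = ([r], {(x,y,z) : x ≠ y})` (colors indexed `0, …, r-1`). -/
def QPalette (r : ℕ) : Palette (Fin r) := ⟨{t | t.1 ≠ t.2.1}⟩

/-- The palette `Q²_r = ([r], {(x,y,z) : x ≠ y ∧ y ≠ z})`. -/
def Q2Palette (r : ℕ) : Palette (Fin r) := ⟨{t | t.1 ≠ t.2.1 ∧ t.2.1 ≠ t.2.2}⟩

/-- The palette `Q⁺¹₅ = ([5], {(1,2,3), (4,5,1)})`, with colors relabelled `0,…,4`. -/
def Qplus1 : Palette (Fin 5) := ⟨{(0, 1, 2), (3, 4, 0)}⟩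

/-- The palette `Q⁺²₅ = ([5], {(1,2,3), (4,1,5)})`, with colors relabelled `0,…,4`. -/
def Qplus2 : Palette (Fin 5) := ⟨{(0, 1, 2), (3, 0, 4)}⟩

/-- The palette `Q⁻₃ = ([3], {(1,2,3)})`, with colors relabelled `0,1,2`. -/
def Qminus3 : Palette (Fin 3) := ⟨{(0, 1, 2)}⟩

/-- The palette `Q'⁻₃ = ([3], {(1,3,1),(1,3,2),(2,3,1),(2,3,2)})`, relabelled `0,1,2`. -/
def Qpminus3 : Palette (Fin 3) := ⟨{(0, 2, 0), (0, 2, 1), (1, 2, 0), (1, 2, 1)}⟩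

/-- A 3-uniform hypergraph on a vertex type `V`. -/
structure ThreeGraph (V : Type) where
  edges : Set (Set V)
  card_eq : ∀ e ∈ edges, e.ncard = 3

/-- The complete 3-graph on a vertex type. -/
def completeThreeGraph (V : Type) : ThreeGraph V := ⟨{e | e.ncard = 3}, fun _ he => he⟩

/-- `F` is `P`-colorable: there are a linear order on `V(F)` and a coloring of the
pairs such that every edge, listed in increasing order, gives an admissible triple. -/
def PaletteColorable {V C : Type} (F : ThreeGraph V) (P : Palette C) : Prop :=
  ∃ (L : LinearOrder V) (φ : V → V → C),
    ∀ u v w : V, L.lt u v → L.lt v w → ({u, v, w} : Set V) ∈ F.edges →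
      (φ u v, φ u w, φ v w) ∈ P.A

/-- `H` is `F`-free: no injection of `V(F)` into `V(H)` maps edges to edges. -/
def FreeOf {V W : Type} (F : ThreeGraph V) (H : ThreeGraph W) : Prop :=
  ¬ ∃ f : V → W, Function.Injective f ∧ ∀ e ∈ F.edges, f '' e ∈ H.edges

/-- `H` is uniformly `(d, μ)`-dense: every vertex subset `U` spans at least
`d · C(|U|,3) − μ · |V(H)|³` edges. -/
def UniformlyDense {V : Type} [Fintype V] (H : ThreeGraph V) (d μ : ℝ) : Prop :=
  ∀ U : Set V,
    d * (Nat.choose U.ncard 3 : ℝ) - μ * (Fintype.card V : ℝ) ^ 3 ≤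
      ({e | e ∈ H.edges ∧ e ⊆ U} : Set (Set V)).ncard

/-- The uniform Turán density `π_u(F)`. -/
noncomputable def uniformTuranDensity {V : Type} (F : ThreeGraph V) : ℝ :=
  sSup {d : ℝ | 0 ≤ d ∧ d ≤ 1 ∧ ∀ μ : ℝ, 0 < μ → ∀ n₀ : ℕ,
    ∃ (n : ℕ) (H : ThreeGraph (Fin n)), n₀ ≤ n ∧ FreeOf F H ∧ UniformlyDense H d μ}

/-! ### Auxiliary definitions and lemmas for `stmt1` -/

/-- Lexicographic strict ordering on `Fin m × Fin k`. -/
def XOrd {m k : ℕ} (x y : Fin m × Fin k) : Prop :=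
  x.1 < y.1 ∨ (x.1 = y.1 ∧ x.2 < y.2)

lemma XOrd_ne {m k : ℕ} {x y : Fin m × Fin k} (h : XOrd x y) : x ≠ y := by
  rintro rfl
  rcases h with h | ⟨-, h⟩ <;> exact lt_irrefl _ h

lemma keyf {a b u v R : ℕ} (hu : u < R) (hv : v < R)
    (h : a * R + u = b * R + v) : a = b ∧ u = v := by
  have hab : a = b := by
    rcases Nat.lt_trichotomy a b with hlt | he | hlt
    · exfalso
      have hc : a * R + u < b * R + v := by
        calc a * R + u < a * R + R := by omega
          _ = (a + 1) * R := by ring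
          _ ≤ b * R := Nat.mul_le_mul_right R hlt
          _ ≤ b * R + v := Nat.le_add_right _ _
      omega
    · exact he
    · exfalso
      have hc : b * R + v < a * R + u := by
        calc b * R + v < b * R + R := by omega
          _ = (b + 1) * R := by ring
          _ ≤ a * R := Nat.mul_le_mul_right R hlt
          _ ≤ a * R + u := Nat.le_add_right _ _
      omega
  subst hab
  omega

/-- The numeric value of an element of `Fin (r^2) × Fin r`. -/
def gvalX (r : ℕ) (x : Fin (r ^ 2) × Fin r) : ℕ := x.1.val * r + x.2.val

lemma gvalX_lt (r : ℕ) (x : Fin (r ^ 2) × Fin r) : gvalX r x < r ^ 3 := by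
  have h1 : x.1.val + 1 ≤ r ^ 2 := x.1.isLt
  have h2 : x.2.val < r := x.2.isLt
  have h3 : (x.1.val + 1) * r ≤ r ^ 2 * r := Nat.mul_le_mul_right r h1
  calc gvalX r x = x.1.val * r + x.2.val := rfl
    _ < x.1.val * r + r := by omega
    _ = (x.1.val + 1) * r := by ring
    _ ≤ r ^ 2 * r := h3
    _ = r ^ 3 := by ring

lemma gvalX_mono {r : ℕ} {x y : Fin (r ^ 2) × Fin r} (h : XOrd x y) :
    gvalX r x < gvalX r y := by
  rcases h with h | ⟨he, h⟩
  · have h2 : x.2.val < r := x.2.isLt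
    have h3 : (x.1.val + 1) * r ≤ y.1.val * r := Nat.mul_le_mul_right r h
    calc gvalX r x = x.1.val * r + x.2.val := rfl
      _ < x.1.val * r + r := by omega
      _ = (x.1.val + 1) * r := by ring
      _ ≤ y.1.val * r := h3
      _ ≤ y.1.val * r + y.2.val := Nat.le_add_right _ _
  · show x.1.val * r + x.2.val < y.1.val * r + y.2.val
    rw [he]
    have h2 : x.2.val < y.2.val := h
    omega

/-- The numeric value of a vertex of our hypergraph. -/
def fWX (r : ℕ) (w : Fin 4 × Fin (r ^ 2) × Fin r) : ℕ :=
  w.1.val * r ^ 3 + gvalX r w.2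

lemma fWX_inj (r : ℕ) : Function.Injective (fWX r) := by
  intro u v h
  obtain ⟨h1, h2⟩ := keyf (gvalX_lt r u.2) (gvalX_lt r v.2) h
  obtain ⟨h3, h4⟩ := keyf u.2.2.isLt v.2.2.isLt h2
  exact Prod.ext (Fin.ext h1) (Prod.ext (Fin.ext h3) (Fin.ext h4))

lemma fWX_blk {r : ℕ} {p q : Fin 4} (h : p.val < q.val) (x y : Fin (r ^ 2) × Fin r) :
    fWX r (p, x) < fWX r (q, y) := by
  have h1 := gvalX_lt r x
  have h2 : (p.val + 1) * r ^ 3 ≤ q.val * r ^ 3 := Nat.mul_le_mul_right _ h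
  calc fWX r (p, x) = p.val * r ^ 3 + gvalX r x := rfl
    _ < p.val * r ^ 3 + r ^ 3 := by omega
    _ = (p.val + 1) * r ^ 3 := by ring
    _ ≤ q.val * r ^ 3 := h2
    _ ≤ fWX r (q, y) := Nat.le_add_right _ _

lemma fWX_inn {r : ℕ} (p : Fin 4) {x y : Fin (r ^ 2) × Fin r} (h : XOrd x y) :
    fWX r (p, x) < fWX r (p, y) :=
  Nat.add_lt_add_left (gvalX_mono h) _

/-- Sorted triples with equal underlying sets coincide. -/
lemma tri' {α : Type} {f : α → ℕ} (hf : Function.Injective f) {u v w a b c : α}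
    (h1 : f u < f v) (h2 : f v < f w) (h3 : f a < f b) (h4 : f b < f c)
    (hs : ({u, v, w} : Set α) = {a, b, c}) : u = a ∧ v = b ∧ w = c := by
  have hu : u = a ∨ u = b ∨ u = c := by
    have : u ∈ ({a, b, c} : Set α) := by rw [← hs]; simp
    simpa using this
  have hv : v = a ∨ v = b ∨ v = c := by
    have : v ∈ ({a, b, c} : Set α) := by rw [← hs]; simp
    simpa using this
  have hw : w = a ∨ w = b ∨ w = c := by
    have : w ∈ ({a, b, c} : Set α) := by rw [← hs]; simp
    simpa using this
  have k1 : f u = f a ∨ f u = f b ∨ f u = f c := by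
    rcases hu with h | h | h <;> simp [h]
  have k2 : f v = f a ∨ f v = f b ∨ f v = f c := by
    rcases hv with h | h | h <;> simp [h]
  have k3 : f w = f a ∨ f w = f b ∨ f w = f c := by
    rcases hw with h | h | h <;> simp [h]
  have key : f u = f a ∧ f v = f b ∧ f w = f c := by omega
  exact ⟨hf key.1, hf key.2.1, hf key.2.2⟩

/-- The gadget lemma: any `(r-1)`-coloring of the `r²`-fold blow-up sequence of the
vertices of a digraph `D` whose underlying graph is complete has a monochromatic
forward arc. -/
lemma gadget {V : Type} (r : ℕ) (hr : 3 ≤ r) (e : Fin r ≃ V) (D : Digr V)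
    (hstar : ∀ u v : V, u ≠ v → D.Adj u v ∨ D.Adj v u)
    (c : Fin (r ^ 2) × Fin r → Fin (r - 1)) :
    ∃ x y : Fin (r ^ 2) × Fin r, XOrd x y ∧ D.Adj (e x.2) (e y.2) ∧ c x = c y := by
  by_contra hcon
  push_neg at hcon
  classical
  have hnadj : ∀ x y : Fin (r ^ 2) × Fin r, XOrd x y → c x = c y →
      ¬ D.Adj (e x.2) (e y.2) := fun x y h1 h2 ha => hcon x y h1 ha h2
  let NF : Fin (r ^ 2) × Fin r → Prop := fun x => ∃ y, y.2 = x.2 ∧ XOrd y x ∧ c y = c x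
  let g : Fin (r ^ 2) × Fin r → Fin (r - 1) × (Fin (r ^ 2) ⊕ Fin r) :=
    fun x => (c x, if NF x then Sum.inl x.1 else Sum.inr x.2)
  have hginj : Function.Injective g := by
    intro x y hg
    have hc : c x = c y := congrArg Prod.fst hg
    have hs := congrArg Prod.snd hg
    simp only [g] at hs
    by_cases hx : NF x <;> by_cases hy : NF y
    · rw [if_pos hx, if_pos hy] at hs
      have h1 : x.1 = y.1 := by simpa using hs
      by_contra hne
      have h2 : x.2 ≠ y.2 := fun h2 => hne (Prod.ext h1 h2)
      rcases lt_or_gt_of_ne h2 with hlt | hgt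
      · obtain ⟨y', hy1, hy2, hy3⟩ := hy
        have hyy : y'.1 < y.1 := by
          rcases hy2 with hh | ⟨-, hh⟩
          · exact hh
          · rw [hy1] at hh; exact absurd hh (lt_irrefl _)
        have hne2 : e x.2 ≠ e y.2 := fun hh => h2 (e.injective hh)
        rcases hstar _ _ hne2 with ha | ha
        · exact hnadj x y (Or.inr ⟨h1, hlt⟩) hc ha
        · have hna : ¬ D.Adj (e y'.2) (e x.2) :=
            hnadj y' x (Or.inl (by rw [h1]; exact hyy)) (hy3.trans hc.symm)
          rw [hy1] at hna; exact hna ha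
      · obtain ⟨x', hx1, hx2, hx3⟩ := hx
        have hxx : x'.1 < x.1 := by
          rcases hx2 with hh | ⟨-, hh⟩
          · exact hh
          · rw [hx1] at hh; exact absurd hh (lt_irrefl _)
        have hne2 : e y.2 ≠ e x.2 := fun hh => h2 (e.injective hh).symm
        rcases hstar _ _ hne2 with ha | ha
        · exact hnadj y x (Or.inr ⟨h1.symm, hgt⟩) hc.symm ha
        · have hna : ¬ D.Adj (e x'.2) (e y.2) :=
            hnadj x' y (Or.inl (by rw [← h1]; exact hxx)) (hx3.trans hc)
          rw [hx1] at hna; exact hna ha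
    · rw [if_pos hx, if_neg hy] at hs; exact absurd hs (by simp)
    · rw [if_neg hx, if_pos hy] at hs; exact absurd hs (by simp)
    · rw [if_neg hx, if_neg hy] at hs
      have h2 : x.2 = y.2 := by simpa using hs
      by_contra hne
      have h1 : x.1 ≠ y.1 := fun h1 => hne (Prod.ext h1 h2)
      rcases lt_or_gt_of_ne h1 with hlt | hgt
      · exact hy ⟨x, h2, Or.inl hlt, hc⟩
      · exact hx ⟨y, h2.symm, Or.inl hgt, hc.symm⟩
  have hcard := Fintype.card_le_of_injective g hginj
  simp only [Fintype.card_prod, Fintype.card_sum, Fintype.card_fin] at hcard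
  obtain ⟨s, rfl⟩ : ∃ s, r = s + 3 := ⟨r - 3, by omega⟩
  have hsub : s + 3 - 1 = s + 2 := by omega
  rw [hsub] at hcard
  have key : (s + 2) * ((s + 3) ^ 2 + (s + 3)) + (s + 3) = (s + 3) ^ 2 * (s + 3) := by ring
  linarith [hcard, key]

/-- The pair coloring of our hypergraph. -/
def colorOf (r : ℕ) {V₁ V₂ : Type} (e₁ : Fin r ≃ V₁) (e₂ : Fin r ≃ V₂) (h : 0 < r)
    (u v : Fin 4 × Fin (r ^ 2) × Fin r) : (V₁ ⊕ V₁ × V₁) ⊕ V₂ ⊕ V₂ × V₂ :=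
  if u.1 = 0 ∧ v.1 = 2 then Sum.inl (Sum.inl (e₁ v.2.2))
  else if u.1 = 2 ∧ v.1 = 2 then Sum.inl (Sum.inr (e₁ u.2.2, e₁ v.2.2))
  else if u.1 = 1 ∧ v.1 = 3 then Sum.inl (Sum.inl (e₁ v.2.2))
  else if u.1 = 3 ∧ v.1 = 3 then Sum.inl (Sum.inr (e₁ u.2.2, e₁ v.2.2))
  else if u.1 = 1 ∧ v.1 = 1 then Sum.inr (Sum.inr (e₂ u.2.2, e₂ v.2.2))
  else if u.1 = 1 ∧ v.1 = 2 then Sum.inr (Sum.inl (e₂ u.2.2))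
  else if u.1 = 0 ∧ v.1 = 0 then Sum.inr (Sum.inr (e₂ u.2.2, e₂ v.2.2))
  else if u.1 = 0 ∧ v.1 = 3 then Sum.inr (Sum.inl (e₂ u.2.2))
  else Sum.inl (Sum.inl (e₁ ⟨0, h⟩))

/-- The edge set of our hypergraph. -/
def edgesF (r : ℕ) {V₁ V₂ : Type} (e₁ : Fin r ≃ V₁) (e₂ : Fin r ≃ V₂)
    (D : Digr V₁) (D' : Digr V₂) : Set (Set (Fin 4 × Fin (r ^ 2) × Fin r)) :=
  {E | (∃ b x y, XOrd x y ∧ D.Adj (e₁ x.2) (e₁ y.2) ∧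
          E = {((0 : Fin 4), b), ((2 : Fin 4), x), ((2 : Fin 4), y)})
     ∨ (∃ b x y, XOrd x y ∧ D.Adj (e₁ x.2) (e₁ y.2) ∧
          E = {((1 : Fin 4), b), ((3 : Fin 4), x), ((3 : Fin 4), y)})
     ∨ (∃ t x y, XOrd x y ∧ D'.Adj (e₂ x.2) (e₂ y.2) ∧
          E = {((1 : Fin 4), x), ((1 : Fin 4), y), ((2 : Fin 4), t)})
     ∨ (∃ t x y, XOrd x y ∧ D'.Adj (e₂ x.2) (e₂ y.2) ∧
          E = {((0 : Fin 4), x), ((0 : Fin 4), y), ((3 : Fin 4), t)})}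


/-- For `r ≥ 3` and `D, D' ∈ 𝓕_r^*`, there exists a 3-graph `F` that
is `Q^L_D ⊍ Q^R_{D'}`-colorable but not `Q_{r-1}`-colorable. -/
theorem stmt1 (r : ℕ) (hr : 3 ≤ r) (V₁ V₂ : Type) [Fintype V₁] [Fintype V₂]
    (D : Digr V₁) (D' : Digr V₂) (hD : IsGoodStar r D) (hD' : IsGoodStar r D') :
    ∃ (W : Type) (_ : Fintype W) (F : ThreeGraph W),
      PaletteColorable F ((leftPalette D).union (rightPalette D')) ∧
      ¬ PaletteColorable F (QPalette (r - 1)) := by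
  classical
  obtain ⟨⟨hcard1, -⟩, hstar1⟩ := hD
  obtain ⟨⟨hcard2, -⟩, hstar2⟩ := hD'
  have hr0 : 0 < r := by omega
  have hr20 : 0 < r ^ 2 := by positivity
  let e₁ : Fin r ≃ V₁ := (Fintype.equivFinOfCardEq hcard1).symm
  let e₂ : Fin r ≃ V₂ := (Fintype.equivFinOfCardEq hcard2).symm
  refine ⟨Fin 4 × Fin (r ^ 2) × Fin r, inferInstance, ⟨edgesF r e₁ e₂ D D', ?_⟩, ?_, ?_⟩
  · -- every edge has three elements
    intro E hE
    simp only [edgesF, Set.mem_setOf_eq] at hE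
    obtain ⟨b, x, y, hxy, -, rfl⟩ | ⟨b, x, y, hxy, -, rfl⟩ |
      ⟨t, x, y, hxy, -, rfl⟩ | ⟨t, x, y, hxy, -, rfl⟩ := hE
    · refine Set.ncard_eq_three.mpr ⟨_, _, _, ?_, ?_, ?_, rfl⟩
      · exact fun hh => absurd (congrArg Prod.fst hh) (show ¬(0 : Fin 4) = 2 by decide)
      · exact fun hh => absurd (congrArg Prod.fst hh) (show ¬(0 : Fin 4) = 2 by decide)
      · exact fun hh => XOrd_ne hxy (congrArg Prod.snd hh)
    · refine Set.ncard_eq_three.mpr ⟨_, _, _, ?_, ?_, ?_, rfl⟩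
      · exact fun hh => absurd (congrArg Prod.fst hh) (show ¬(1 : Fin 4) = 3 by decide)
      · exact fun hh => absurd (congrArg Prod.fst hh) (show ¬(1 : Fin 4) = 3 by decide)
      · exact fun hh => XOrd_ne hxy (congrArg Prod.snd hh)
    · refine Set.ncard_eq_three.mpr ⟨_, _, _, ?_, ?_, ?_, rfl⟩
      · exact fun hh => XOrd_ne hxy (congrArg Prod.snd hh)
      · exact fun hh => absurd (congrArg Prod.fst hh) (show ¬(1 : Fin 4) = 2 by decide)
      · exact fun hh => absurd (congrArg Prod.fst hh) (show ¬(1 : Fin 4) = 2 by decide)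
    · refine Set.ncard_eq_three.mpr ⟨_, _, _, ?_, ?_, ?_, rfl⟩
      · exact fun hh => XOrd_ne hxy (congrArg Prod.snd hh)
      · exact fun hh => absurd (congrArg Prod.fst hh) (show ¬(0 : Fin 4) = 3 by decide)
      · exact fun hh => absurd (congrArg Prod.fst hh) (show ¬(0 : Fin 4) = 3 by decide)
  · -- colorable by the union palette
    refine ⟨LinearOrder.lift' (fWX r) (fWX_inj r), colorOf r e₁ e₂ hr0, ?_⟩
    intro u v w huv hvw hE
    have huv' : fWX r u < fWX r v := huv
    have hvw' : fWX r v < fWX r w := hvw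
    simp only [edgesF, Set.mem_setOf_eq] at hE
    obtain ⟨b, x, y, hxy, hadj, hEq⟩ | ⟨b, x, y, hxy, hadj, hEq⟩ |
      ⟨t, x, y, hxy, hadj, hEq⟩ | ⟨t, x, y, hxy, hadj, hEq⟩ := hE
    · obtain ⟨rfl, rfl, rfl⟩ := tri' (fWX_inj r) huv' hvw'
        (fWX_blk (show ((0 : Fin 4)).val < ((2 : Fin 4)).val by decide) b x)
        (fWX_inn _ hxy) hEq
      exact Or.inl ⟨Sum.inl (e₁ x.2), Sum.inl (e₁ y.2), Sum.inr (e₁ x.2, e₁ y.2),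
        ⟨e₁ x.2, e₁ y.2, hadj, rfl⟩, rfl⟩
    · obtain ⟨rfl, rfl, rfl⟩ := tri' (fWX_inj r) huv' hvw'
        (fWX_blk (show ((1 : Fin 4)).val < ((3 : Fin 4)).val by decide) b x)
        (fWX_inn _ hxy) hEq
      exact Or.inl ⟨Sum.inl (e₁ x.2), Sum.inl (e₁ y.2), Sum.inr (e₁ x.2, e₁ y.2),
        ⟨e₁ x.2, e₁ y.2, hadj, rfl⟩, rfl⟩
    · obtain ⟨rfl, rfl, rfl⟩ := tri' (fWX_inj r) huv' hvw'
        (fWX_inn _ hxy)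
        (fWX_blk (show ((1 : Fin 4)).val < ((2 : Fin 4)).val by decide) y t) hEq
      exact Or.inr ⟨Sum.inr (e₂ x.2, e₂ y.2), Sum.inl (e₂ x.2), Sum.inl (e₂ y.2),
        ⟨e₂ x.2, e₂ y.2, hadj, rfl⟩, rfl⟩
    · obtain ⟨rfl, rfl, rfl⟩ := tri' (fWX_inj r) huv' hvw'
        (fWX_inn _ hxy)
        (fWX_blk (show ((0 : Fin 4)).val < ((3 : Fin 4)).val by decide) y t) hEq
      exact Or.inr ⟨Sum.inr (e₂ x.2, e₂ y.2), Sum.inl (e₂ x.2), Sum.inl (e₂ y.2),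
        ⟨e₂ x.2, e₂ y.2, hadj, rfl⟩, rfl⟩
  · -- not Q_{r-1}-colorable
    rintro ⟨L', ψ, h⟩
    letI := L'
    haveI : Nonempty (Fin 4 × Fin (r ^ 2) × Fin r) := ⟨(0, ⟨0, hr20⟩, ⟨0, hr0⟩)⟩
    obtain ⟨u₀, hmin⟩ := Finite.exists_min (fun w : Fin 4 × Fin (r ^ 2) × Fin r => w)
    have core : ∀ u0 : Fin 4 × Fin (r ^ 2) × Fin r, (∀ w', L'.le u0 w') →
        ∀ q : Fin 4, q ≠ u0.1 → ∀ (V : Type) (DD : Digr V) (ee : Fin r ≃ V),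
        (∀ a b : V, a ≠ b → DD.Adj a b ∨ DD.Adj b a) →
        (∀ x y : Fin (r ^ 2) × Fin r, XOrd x y → DD.Adj (ee x.2) (ee y.2) →
          ({u0, (q, x), (q, y)} : Set (Fin 4 × Fin (r ^ 2) × Fin r)) ∈
            edgesF r e₁ e₂ D D') → False := by
      intro u0 hm q hq V DD ee hst hedge
      obtain ⟨x, y, hxy, hadj, hceq⟩ := gadget r hr ee DD hst (fun x => ψ u0 (q, x))
      have hvx : L'.lt u0 (q, x) :=
        @lt_of_le_of_ne _ L'.toPartialOrder _ _ (hm _) (fun hh => hq (by rw [hh]))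
      have hvy : L'.lt u0 (q, y) :=
        @lt_of_le_of_ne _ L'.toPartialOrder _ _ (hm _) (fun hh => hq (by rw [hh]))
      have hxyne : ((q, x) : Fin 4 × Fin (r ^ 2) × Fin r) ≠ (q, y) :=
        fun hh => XOrd_ne hxy (congrArg Prod.snd hh)
      have hmem := hedge x y hxy hadj
      rcases @lt_or_gt_of_ne _ L' _ _ hxyne with hlt | hgt
      · have hres := h u0 (q, x) (q, y) hvx hlt hmem
        exact absurd hceq (by simpa [QPalette, Set.mem_setOf_eq] using hres)
      · have hsetEq : ({u0, (q, y), (q, x)} : Set (Fin 4 × Fin (r ^ 2) × Fin r))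
            = {u0, (q, x), (q, y)} :=
          congrArg (fun s => insert u0 s) (Set.pair_comm _ _)
        have hres := h u0 (q, y) (q, x) hvy hgt (by rw [hsetEq]; exact hmem)
        exact absurd hceq.symm (by simpa [QPalette, Set.mem_setOf_eq] using hres)
    obtain ⟨p, z⟩ := u₀
    fin_cases p
    · exact core ((0 : Fin 4), z) hmin 2 (show (2 : Fin 4) ≠ (0 : Fin 4) by decide)
        _ D e₁ hstar1 (fun x y hxy hadj => Or.inl ⟨z, x, y, hxy, hadj, rfl⟩)
    · exact core ((1 : Fin 4), z) hmin 3 (show (3 : Fin 4) ≠ (1 : Fin 4) by decide)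
        _ D e₁ hstar1 (fun x y hxy hadj => Or.inr (Or.inl ⟨z, x, y, hxy, hadj, rfl⟩))
    · exact core ((2 : Fin 4), z) hmin 1 (show (1 : Fin 4) ≠ (2 : Fin 4) by decide)
        _ D' e₂ hstar2 (fun x y hxy hadj => Or.inr (Or.inr (Or.inl ⟨z, x, y, hxy, hadj, by
          ext w'; simp only [Set.mem_insert_iff, Set.mem_singleton_iff]; tauto⟩)))
    · exact core ((3 : Fin 4), z) hmin 0 (show (0 : Fin 4) ≠ (3 : Fin 4) by decide)
        _ D' e₂ hstar2 (fun x y hxy hadj => Or.inr (Or.inr (Or.inr ⟨z, x, y, hxy, hadj, by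
          ext w'; simp only [Set.mem_insert_iff, Set.mem_singleton_iff]; tauto⟩)))
end

section
/- Let C₃ be the directed cycle on three vertices and let T'₄ be a tournament on four vertices that contains a directed 3-cycle, and set D₁₀ = C₃ ⊕ C₃ ⊕ T'₄. Then for all sufficiently large n, ex(n, D₁₀) > 2·ex(n, K₁₀); in particular, D₁₀ is not 10-good. -/
/-! ### Auxiliary material for the proof of `stmt14` -/

open Finset in
private lemma aux_tri_card (c : ℕ) :
    ((range c ×ˢ range c).filter (fun p => p.2 ≤ p.1)).card * 2 = c * (c+1) := by
  have h : (((range c ×ˢ range c).filter (fun p => p.2 ≤ p.1)).card : ℕ)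
      = ∑ x ∈ range c, (x + 1) := by
    rw [Finset.card_eq_sum_card_fiberwise
      (f := fun p : ℕ × ℕ => p.1) (t := range c)
      (fun p hp => by simp only [mem_coe, mem_filter, mem_product] at hp; exact hp.1.1)]
    refine Finset.sum_congr rfl fun x hx => ?_
    rw [mem_range] at hx
    have he : filter (fun p : ℕ × ℕ => p.1 = x)
          ((range c ×ˢ range c).filter (fun p => p.2 ≤ p.1))
        = (range (x+1)).image (fun y => (x, y)) := by
      ext ⟨a, b⟩
      simp only [mem_filter, mem_product, mem_range, mem_image]
      constructor
      · rintro ⟨⟨⟨ha, hb⟩, hba⟩, rfl⟩; exact ⟨b, by omega, rfl⟩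
      · rintro ⟨y, hy, hh⟩; cases hh; omega
    rw [he, Finset.card_image_of_injective _ (fun a b hh => by cases hh; rfl),
      Finset.card_range]
  rw [h]
  have hg := Finset.sum_range_id_mul_two (c+1)
  simp only [Nat.add_sub_cancel] at hg
  rw [Finset.sum_range_succ] at hg
  have h2 : ∑ x ∈ range c, (x+1) = (∑ x ∈ range c, x) + c := by
    rw [Finset.sum_add_distrib]; simp
  rw [h2, mul_comm c (c+1)]; omega

/-- The extremal digraph: all `i → j` with `i < j`, together with both arcs between
any two vertices in different residue classes mod 5. -/
private def auxGdig (n : ℕ) : Digr (Fin n) :=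
  ⟨fun i j => (i : ℕ) < (j : ℕ) ∨ (i : ℕ) % 5 ≠ (j : ℕ) % 5,
   fun v h => by rcases h with h | h; exact lt_irrefl _ h; exact h rfl⟩

private lemma auxGfree (n : ℕ) {V : Type} (T₄ : Digr V) (h2 : T₄.Contains cycle3) :
    ¬ (auxGdig n).Contains ((cycle3.sum cycle3).sum T₄) := by
  rintro ⟨f, finj, hf⟩
  obtain ⟨g, ginj, hg⟩ := h2
  set r : Fin n → ℕ := fun x => (x : ℕ) % 5 with hrdef
  have bid : ∀ x y : Fin n, (auxGdig n).Adj x y → (auxGdig n).Adj y x → r x ≠ r y := by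
    intro x y hxy hyx
    simp only [auxGdig, hrdef] at hxy hyx ⊢
    omega
  have tri : ∀ x y z : Fin n, (auxGdig n).Adj x y → (auxGdig n).Adj y z →
      (auxGdig n).Adj z x → r x ≠ r y ∨ r y ≠ r z := by
    intro x y z h1 h2 h3
    simp only [auxGdig, hrdef] at h1 h2 h3 ⊢
    omega
  set X : Fin 3 → Fin n := fun a => f (Sum.inl (Sum.inl a)) with hX
  set Y : Fin 3 → Fin n := fun a => f (Sum.inl (Sum.inr a)) with hY
  set Z : Fin 3 → Fin n := fun a => f (Sum.inr (g a)) with hZ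
  have aX : ∀ a b : Fin 3, b = a + 1 → (auxGdig n).Adj (X a) (X b) := fun a b h => hf _ _ h
  have aY : ∀ a b : Fin 3, b = a + 1 → (auxGdig n).Adj (Y a) (Y b) := fun a b h => hf _ _ h
  have aZ : ∀ a b : Fin 3, b = a + 1 → (auxGdig n).Adj (Z a) (Z b) :=
    fun a b h => hf _ _ (hg a b h)
  have cXY : ∀ a b : Fin 3, r (X a) ≠ r (Y b) :=
    fun a b => bid _ _ (hf _ _ trivial) (hf _ _ trivial)
  have cXZ : ∀ a b : Fin 3, r (X a) ≠ r (Z b) :=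
    fun a b => bid _ _ (hf _ _ trivial) (hf _ _ trivial)
  have cYZ : ∀ a b : Fin 3, r (Y a) ≠ r (Z b) :=
    fun a b => bid _ _ (hf _ _ trivial) (hf _ _ trivial)
  have dX : r (X 0) ≠ r (X 1) ∨ r (X 1) ≠ r (X 2) :=
    tri _ _ _ (aX 0 1 (by decide)) (aX 1 2 (by decide)) (aX 2 0 (by decide))
  have dY : r (Y 0) ≠ r (Y 1) ∨ r (Y 1) ≠ r (Y 2) :=
    tri _ _ _ (aY 0 1 (by decide)) (aY 1 2 (by decide)) (aY 2 0 (by decide))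
  have dZ : r (Z 0) ≠ r (Z 1) ∨ r (Z 1) ≠ r (Z 2) :=
    tri _ _ _ (aZ 0 1 (by decide)) (aZ 1 2 (by decide)) (aZ 2 0 (by decide))
  have eX : ∃ a b : Fin 3, r (X a) ≠ r (X b) := by
    rcases dX with h | h
    exacts [⟨0, 1, h⟩, ⟨1, 2, h⟩]
  have eY : ∃ a b : Fin 3, r (Y a) ≠ r (Y b) := by
    rcases dY with h | h
    exacts [⟨0, 1, h⟩, ⟨1, 2, h⟩]
  have eZ : ∃ a b : Fin 3, r (Z a) ≠ r (Z b) := by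
    rcases dZ with h | h
    exacts [⟨0, 1, h⟩, ⟨1, 2, h⟩]
  obtain ⟨a1, b1, h1⟩ := eX
  obtain ⟨a2, b2, h2⟩ := eY
  obtain ⟨a3, b3, h3⟩ := eZ
  have m1 : r (X a1) < 5 := Nat.mod_lt _ (by norm_num)
  have m2 : r (X b1) < 5 := Nat.mod_lt _ (by norm_num)
  have m3 : r (Y a2) < 5 := Nat.mod_lt _ (by norm_num)
  have m4 : r (Y b2) < 5 := Nat.mod_lt _ (by norm_num)
  have m5 : r (Z a3) < 5 := Nat.mod_lt _ (by norm_num)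
  have m6 : r (Z b3) < 5 := Nat.mod_lt _ (by norm_num)
  have := cXY a1 a2; have := cXY a1 b2; have := cXY b1 a2; have := cXY b1 b2
  have := cXZ a1 a3; have := cXZ a1 b3; have := cXZ b1 a3; have := cXZ b1 b3
  have := cYZ a2 a3; have := cYZ a2 b3; have := cYZ b2 a3; have := cYZ b2 b3
  omega

open Finset in
private lemma auxGarcs (n : ℕ) : ∃ t : ℕ,
    2 * t ≤ ((n+4)/5) * ((n+4)/5 + 1) ∧ n * n ≤ (auxGdig n).arcCount + 5 * t := by
  classical
  set c := (n+4)/5 with hc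
  set tri := (range c ×ˢ range c).filter (fun p : ℕ × ℕ => p.2 ≤ p.1) with htri
  refine ⟨tri.card, by rw [mul_comm]; exact le_of_eq (aux_tri_card c), ?_⟩
  have harc : (auxGdig n).arcCount
      = ((univ : Finset (Fin n × Fin n)).filter (fun p => (auxGdig n).Adj p.1 p.2)).card := by
    rw [Digr.arcCount, Set.ncard_eq_toFinset_card']
    congr 1
    ext p
    simp [Set.mem_toFinset]
  have hsplit := Finset.card_filter_add_card_filter_not
    (s := (univ : Finset (Fin n × Fin n))) (p := fun p => (auxGdig n).Adj p.1 p.2)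
  beta_reduce at hsplit
  have huniv : (univ : Finset (Fin n × Fin n)).card = n * n := by simp
  have hcomp : ((univ : Finset (Fin n × Fin n)).filter
      (fun p => ¬ (auxGdig n).Adj p.1 p.2)).card ≤ 5 * tri.card := by
    have h5 : 5 * tri.card = ((univ : Finset (Fin 5)) ×ˢ tri).card := by
      rw [Finset.card_product]; simp
    rw [h5]
    apply Finset.card_le_card_of_injOn
      (fun p => (⟨(p.1 : ℕ) % 5, by omega⟩, ((p.1 : ℕ) / 5, (p.2 : ℕ) / 5)))
    · rintro ⟨i, j⟩ hp
      simp only [mem_coe, mem_filter, auxGdig, mem_univ, true_and, not_or, not_lt, not_ne_iff] at hp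
      obtain ⟨hle, hmod⟩ := hp
      simp only [mem_coe, mem_product, mem_univ, true_and, htri, mem_filter, mem_range]
      have hi : (i : ℕ) < n := i.2
      have hj : (j : ℕ) < n := j.2
      refine ⟨⟨?_, ?_⟩, ?_⟩ <;> omega
    · rintro ⟨i, j⟩ hp ⟨i', j'⟩ hp' heq
      simp only [mem_coe, mem_filter, auxGdig, mem_univ, true_and, not_or, not_lt,
        not_ne_iff] at hp hp'
      have h1 : (i : ℕ) % 5 = (i' : ℕ) % 5 := congrArg Fin.val (congrArg Prod.fst heq)
      have h2 : (i : ℕ) / 5 = (i' : ℕ) / 5 := congrArg Prod.fst (congrArg Prod.snd heq)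
      have h3 : (j : ℕ) / 5 = (j' : ℕ) / 5 := congrArg Prod.snd (congrArg Prod.snd heq)
      obtain ⟨hle, hmod⟩ := hp
      obtain ⟨hle', hmod'⟩ := hp'
      have hii : (i : ℕ) = (i' : ℕ) := by omega
      have hjj : (j : ℕ) = (j' : ℕ) := by omega
      exact Prod.ext (Fin.ext hii) (Fin.ext hjj)
  omega

open Finset in
private lemma aux_turan_edges_le (n : ℕ) :
    2 * (SimpleGraph.turanGraph n 9).edgeFinset.card ≤ n * (n - n/9) := by
  classical
  rw [← SimpleGraph.sum_degrees_eq_twice_card_edges]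
  have hdeg : ∀ v : Fin n, (SimpleGraph.turanGraph n 9).degree v ≤ n - n/9 := by
    intro v
    have h1 : (SimpleGraph.turanGraph n 9).degree v
        = ((univ : Finset (Fin n)).filter
            (fun w : Fin n => ¬ ((v:ℕ) % 9 = (w:ℕ) % 9))).card := by
      have he : (SimpleGraph.turanGraph n 9).neighborFinset v
          = (univ : Finset (Fin n)).filter (fun w : Fin n => ¬ ((v:ℕ) % 9 = (w:ℕ) % 9)) := by
        ext w
        rw [SimpleGraph.mem_neighborFinset]
        simp [SimpleGraph.turanGraph]
      calc (SimpleGraph.turanGraph n 9).degree v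
          = ((SimpleGraph.turanGraph n 9).neighborFinset v).card := rfl
        _ = _ := by rw [he]
    have h2 : n/9 ≤ ((univ : Finset (Fin n)).filter
        (fun w : Fin n => (v:ℕ) % 9 = (w:ℕ) % 9)).card := by
      have hmap : ∀ k ∈ range (n/9), 9 * k + (v:ℕ) % 9 < n := by
        intro k hk
        rw [mem_range] at hk
        have : (v : ℕ) % 9 < 9 := Nat.mod_lt _ (by norm_num)
        omega
      calc n/9 = (range (n/9)).card := (Finset.card_range _).symm
        _ ≤ _ := by
          apply Finset.card_le_card_of_injOn (fun k =>
            if hk : k ∈ range (n/9) then (⟨9 * k + (v:ℕ) % 9, hmap k hk⟩ : Fin n)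
            else v)
          · intro k hk
            rw [mem_coe] at hk
            simp only [mem_coe, mem_filter, mem_univ, true_and, dif_pos hk]
            omega
          · intro k hk k' hk' heq
            rw [mem_coe] at hk hk'
            simp only [dif_pos hk, dif_pos hk'] at heq
            have := congrArg Fin.val heq
            simp only at this
            omega
    have h3 := Finset.card_filter_add_card_filter_not
      (s := (univ : Finset (Fin n))) (p := fun w : Fin n => (v:ℕ) % 9 = (w:ℕ) % 9)
    beta_reduce at h3
    have h4 : (univ : Finset (Fin n)).card = n := by simp
    omega
  calc ∑ v : Fin n, (SimpleGraph.turanGraph n 9).degree v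
      ≤ ∑ _v : Fin n, (n - n/9) := Finset.sum_le_sum (fun v _ => hdeg v)
    _ = n * (n - n/9) := by simp [mul_comm]

private lemma aux_exK_le (n : ℕ) :
    exK n 10 ≤ (SimpleGraph.turanGraph n 9).edgeFinset.card := by
  classical
  apply csSup_le
  · exact ⟨0, ⊥, SimpleGraph.cliqueFree_bot (by norm_num), by simp⟩
  · rintro m ⟨G, hG, rfl⟩
    have h1 : G.edgeSet.ncard = G.edgeFinset.card := by
      rw [← SimpleGraph.coe_edgeFinset, Set.ncard_coe_finset]
    rw [h1]
    exact (SimpleGraph.isTuranMaximal_turanGraph (by norm_num : 0 < 9)).2 hG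

private lemma aux_numeric (n t : ℕ) (hn : 1000 ≤ n)
    (ht : 2 * t ≤ ((n+4)/5) * ((n+4)/5 + 1)) :
    n * (n - n/9) + 5 * t < n * n := by
  set c := (n+4)/5 with hc
  set q := n/9 with hq
  have hc1 : n ≤ 5*c ∧ 5*c ≤ n+4 := by omega
  have hq1 : 9*q ≤ n ∧ n < 9*q + 9 := by omega
  have key : 5 * t < n * q := by nlinarith [hc1.1, hc1.2, hq1.1, hq1.2, ht, hn]
  have hqn : q ≤ n := by omega
  have hid : n * (n - q) + n * q = n * n := by
    rw [← Nat.mul_add, Nat.sub_add_cancel hqn]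
  omega

private lemma aux_le_exDigr {W : Type} (n : ℕ) (D : Digr W) (G : Digr (Fin n))
    (hfree : ¬ G.Contains D) : G.arcCount ≤ exDigr n D := by
  apply le_csSup
  · refine ⟨n * n, ?_⟩
    rintro m ⟨H, -, rfl⟩
    have h := Set.ncard_le_ncard (Set.subset_univ {p : Fin n × Fin n | H.Adj p.1 p.2})
      Set.finite_univ
    rw [Set.ncard_univ] at h
    simpa [Digr.arcCount, Nat.card_eq_fintype_card] using h
  · exact ⟨G, hfree, rfl⟩

/-- for `D₁₀ = C₃ ⊕ C₃ ⊕ T'₄` with `T'₄` a four-vertex tournament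
containing a directed triangle, `ex(n, D₁₀) > 2 ex(n, K₁₀)` for all large `n`;
in particular `D₁₀` is not `10`-good. -/
theorem stmt14 (V : Type) [Fintype V] (hV : Fintype.card V = 4) (T₄ : Digr V)
    (h1 : IsTournament T₄) (h2 : T₄.Contains cycle3) :
    (∃ N : ℕ, ∀ n : ℕ, N ≤ n → 2 * exK n 10 < exDigr n ((cycle3.sum cycle3).sum T₄)) ∧
    ¬ IsGood 10 ((cycle3.sum cycle3).sum T₄) := by
  have main : ∀ n : ℕ, 1000 ≤ n →
      2 * exK n 10 < exDigr n ((cycle3.sum cycle3).sum T₄) := by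
    intro n hn
    obtain ⟨t, ht, harc⟩ := auxGarcs n
    have k4 := aux_le_exDigr n ((cycle3.sum cycle3).sum T₄) (auxGdig n)
      (auxGfree n T₄ h2)
    have k1 := aux_exK_le n
    have k2 := aux_turan_edges_le n
    have k3 := aux_numeric n t hn ht
    omega
  refine ⟨⟨1000, fun n hn => main n hn⟩, ?_⟩
  rintro ⟨-, hall⟩
  have hlt := main 1000 le_rfl
  have heq := hall 1000
  omega
end

section
/- For every r ≥ 2, the complete 3-graph K^{(3)}_{r+2} on r+2 vertices is not Q_r-colorable, where Q_r = ([r], {(x, y, z) ∈ [r]³ : x ≠ y}). -/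
/-- for every `r ≥ 2`, the complete 3-graph on `r + 2` vertices is
not `Q_r`-colorable. -/
theorem stmt15 (r : ℕ) (hr : 2 ≤ r) :
    ¬ PaletteColorable (completeThreeGraph (Fin (r + 2))) (QPalette r) := by
  rintro ⟨L, φ, h⟩
  letI := L
  obtain ⟨u, hu⟩ : ∃ u : Fin (r + 2), ∀ v, v ≠ u → L.lt u v := by
    obtain ⟨u, hu⟩ := @Finite.exists_min (Fin (r+2)) (Fin (r+2)) _ _ L id
    exact ⟨u, fun v hv => (L.lt_iff_le_not_ge _ _).mpr ⟨hu v, fun hle => hv (L.le_antisymm _ _ hle (hu v))⟩⟩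
  have hcard : Fintype.card (Fin r) < Fintype.card {v : Fin (r + 2) // v ≠ u} := by
    simp [Fintype.card_subtype_compl]
  obtain ⟨⟨v, hv⟩, ⟨w, hw⟩, hvw, heq⟩ :=
    Fintype.exists_ne_map_eq_of_card_lt (fun v : {v : Fin (r + 2) // v ≠ u} => φ u v.1) hcard
  have hvw' : v ≠ w := fun e => hvw (by simpa using e)
  have hedge : ∀ a b c : Fin (r + 2), a ≠ b → a ≠ c → b ≠ c →
      ({a, b, c} : Set (Fin (r + 2))) ∈ (completeThreeGraph (Fin (r + 2))).edges := by
    intro a b c hab hac hbc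
    show Set.ncard _ = 3
    rw [Set.ncard_insert_of_notMem (by simp [hab, hac]),
        Set.ncard_insert_of_notMem (by simp [hbc]), Set.ncard_singleton]
  rcases lt_trichotomy v w with hlt | he | hlt
  · exact (h u v w (hu v hv) hlt (hedge u v w (Ne.symm hv) (Ne.symm hw) hvw')) heq
  · exact hvw' he
  · exact (h u w v (hu w hw) hlt (hedge u w v (Ne.symm hw) (Ne.symm hv) hvw'.symm)) heq.symm
end

section
/- Let Q⁺¹₅ = ([5], {(1,2,3), (4,5,1)}) and Q⁺²₅ = ([5], {(1,2,3), (4,1,5)}). If P is a palette such that none of Q⁺¹₅, Q⁺²₅ and rev(Q⁺²₅) is a subpalette of P, then d(P) ≤ 1/27. -/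
/-- if none of `Q⁺¹₅`, `Q⁺²₅`, `rev(Q⁺²₅)` is a subpalette of a
palette `P`, then `d(P) ≤ 1/27`. -/
theorem stmt16 (C : Type) [Fintype C] [Nonempty C] (P : Palette C)
    (h1 : ¬ Subpalette Qplus1 P) (h2 : ¬ Subpalette Qplus2 P)
    (h3 : ¬ Subpalette Qplus2.rev P) :
    P.density ≤ 1 / 27 := by
  classical
  set X1 : Set C := (fun t : C × C × C => t.1) '' P.A with hX1
  set X2 : Set C := (fun t : C × C × C => t.2.1) '' P.A with hX2
  set X3 : Set C := (fun t : C × C × C => t.2.2) '' P.A with hX3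
  -- disjointness
  have hd12 : Disjoint X1 X2 := by
    rw [Set.disjoint_left]
    rintro x ⟨t, ht, rfl⟩ ⟨s, hs, hx⟩
    refine h2 ⟨![t.1, t.2.1, t.2.2, s.1, s.2.2], ?_⟩
    rintro u hu
    rcases hu with h | h
    · subst h; simpa using ht
    · simp only [Set.mem_singleton_iff] at h
      subst h
      have hx' : s.2.1 = t.1 := hx
      have : ((s.1 : C), (t.1 : C), (s.2.2 : C)) = s := by rw [← hx']
      simpa [this] using hs
  have hd13 : Disjoint X1 X3 := by
    rw [Set.disjoint_left]
    rintro x ⟨t, ht, rfl⟩ ⟨s, hs, hx⟩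
    refine h1 ⟨![t.1, t.2.1, t.2.2, s.1, s.2.1], ?_⟩
    rintro u hu
    rcases hu with h | h
    · subst h; simpa using ht
    · simp only [Set.mem_singleton_iff] at h
      subst h
      have hx' : s.2.2 = t.1 := hx
      have : ((s.1 : C), (s.2.1 : C), (t.1 : C)) = s := by rw [← hx']
      simpa [this] using hs
  have hd23 : Disjoint X2 X3 := by
    rw [Set.disjoint_left]
    rintro x ⟨t, ht, rfl⟩ ⟨s, hs, hx⟩
    refine h3 ⟨![t.2.1, s.2.1, s.1, t.2.2, t.1], ?_⟩
    rintro u hu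
    have hu' : (u.2.2, u.2.1, u.1) ∈ Qplus2.A := hu
    rcases hu' with h | h
    · have e1 : u.2.2 = (0 : Fin 5) := congrArg Prod.fst h
      have e2 : u.2.1 = (1 : Fin 5) := congrArg (fun p => p.2.1) h
      have e3 : u.1 = (2 : Fin 5) := congrArg (fun p => p.2.2) h
      have hu2 : u = (u.1, u.2.1, u.2.2) := rfl
      rw [hu2, e1, e2, e3]
      have hx' : s.2.2 = t.2.1 := hx
      have : ((s.1 : C), (s.2.1 : C), (t.2.1 : C)) = s := by rw [← hx']
      simpa [this] using hs
    · simp only [Set.mem_singleton_iff] at h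
      have e1 : u.2.2 = (3 : Fin 5) := congrArg Prod.fst h
      have e2 : u.2.1 = (0 : Fin 5) := congrArg (fun p => p.2.1) h
      have e3 : u.1 = (4 : Fin 5) := congrArg (fun p => p.2.2) h
      have hu2 : u = (u.1, u.2.1, u.2.2) := rfl
      rw [hu2, e1, e2, e3]
      simpa using ht
  -- A is contained in the product
  have hsub : P.A ⊆ X1 ×ˢ X2 ×ˢ X3 := by
    intro t ht
    exact ⟨⟨t, ht, rfl⟩, ⟨t, ht, rfl⟩, ⟨t, ht, rfl⟩⟩
  have hcard : P.A.ncard ≤ X1.ncard * (X2.ncard * X3.ncard) := by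
    have h1 : P.A.ncard ≤ (X1 ×ˢ X2 ×ˢ X3).ncard :=
      Set.ncard_le_ncard hsub (Set.toFinite _)
    have h2 : (X1 ×ˢ X2 ×ˢ X3).ncard = X1.ncard * (X2.ncard * X3.ncard) := by
      simp [Set.ncard_eq_toFinset_card', Set.toFinset_prod]
    omega
  -- sum bound
  have hsum : X1.ncard + X2.ncard + X3.ncard ≤ Fintype.card C := by
    have hun : (X1 ∪ X2 ∪ X3).ncard = X1.ncard + X2.ncard + X3.ncard := by
      rw [Set.ncard_union_eq (by
          simp only [Set.disjoint_union_left]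
          exact ⟨hd13, hd23⟩) (Set.toFinite _) (Set.toFinite _),
        Set.ncard_union_eq hd12 (Set.toFinite _) (Set.toFinite _)]
    calc X1.ncard + X2.ncard + X3.ncard = (X1 ∪ X2 ∪ X3).ncard := hun.symm
      _ ≤ (Set.univ : Set C).ncard := Set.ncard_le_ncard (Set.subset_univ _) (Set.toFinite _)
      _ = Fintype.card C := Set.ncard_univ C ▸ Nat.card_eq_fintype_card
  -- arithmetic
  have hn : (0 : ℝ) < (Fintype.card C : ℝ) := by
    exact_mod_cast Fintype.card_pos
  rw [Palette.density, div_le_div_iff₀ (by positivity) (by norm_num)]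
  have ha : (P.A.ncard : ℝ) ≤ (X1.ncard : ℝ) * ((X2.ncard : ℝ) * (X3.ncard : ℝ)) := by
    exact_mod_cast hcard
  have hs : (X1.ncard : ℝ) + (X2.ncard : ℝ) + (X3.ncard : ℝ) ≤ (Fintype.card C : ℝ) := by
    exact_mod_cast hsum
  set a := (X1.ncard : ℝ); set b := (X2.ncard : ℝ); set c := (X3.ncard : ℝ)
  have ha0 : 0 ≤ a := Nat.cast_nonneg _
  have hb0 : 0 ≤ b := Nat.cast_nonneg _
  have hc0 : 0 ≤ c := Nat.cast_nonneg _
  have hamgm : 27 * (a * (b * c)) ≤ (a + b + c) ^ 3 := by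
    nlinarith [sq_nonneg (a - b), sq_nonneg (b - c), sq_nonneg (a - c),
      mul_nonneg ha0 hb0, mul_nonneg hb0 hc0, mul_nonneg ha0 hc0,
      mul_nonneg (mul_nonneg ha0 hb0) hc0]
  have hcube : (a + b + c) ^ 3 ≤ (Fintype.card C : ℝ) ^ 3 := by
    have : 0 ≤ a + b + c := by linarith
    exact pow_le_pow_left₀ this hs 3
  nlinarith
end

section
/- Let Q⁺²₅ = ([5], {(1,2,3), (4,1,5)}). If P is a palette such that neither Q⁺²₅ nor rev(Q⁺²₅) is a subpalette of P, then d(P) ≤ 4/27. -/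
lemma ncard_prod_aux {α β : Type*} (s : Set α) (t : Set β) :
    (s ×ˢ t).ncard = s.ncard * t.ncard := by
  rw [← Nat.card_coe_set_eq, ← Nat.card_coe_set_eq, ← Nat.card_coe_set_eq,
    Nat.card_congr (Equiv.Set.prod s t), Nat.card_prod]

/-- if neither `Q⁺²₅` nor `rev(Q⁺²₅)` is a subpalette of a palette
`P`, then `d(P) ≤ 4/27`. -/
theorem stmt17 (C : Type) [Fintype C] [Nonempty C] (P : Palette C)
    (h1 : ¬ Subpalette Qplus2 P) (h2 : ¬ Subpalette Qplus2.rev P) :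
    P.density ≤ 4 / 27 := by
  classical
  set M : Set C := {a | ∃ x z, (x, a, z) ∈ P.A} with hMdef
  have hF : ∀ t ∈ P.A, t.1 ∉ M := by
    rintro ⟨a, b, c⟩ ht ⟨x, z, hxz⟩
    exact h1 ⟨![a, b, c, x, z], by
      rintro ⟨t1, t2, t3⟩ (h | h) <;> simp_all [Qplus2, Prod.ext_iff] <;> simp_all⟩
  have hT : ∀ t ∈ P.A, t.2.2 ∉ M := by
    rintro ⟨a, b, c⟩ ht ⟨x, z, hxz⟩
    exact h2 ⟨![c, b, a, z, x], by
      rintro ⟨t1, t2, t3⟩ h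
      simp only [Palette.rev, Qplus2, Set.mem_insert_iff, Set.mem_singleton_iff,
        Set.mem_setOf_eq, Prod.ext_iff] at h
      rcases h with ⟨h1, h2, h3⟩ | ⟨h1, h2, h3⟩ <;> subst h1 <;> subst h2 <;> subst h3 <;>
        simpa using ‹_›⟩
  have hsub : P.A ⊆ Mᶜ ×ˢ (M ×ˢ Mᶜ) := by
    rintro ⟨a, b, c⟩ ht
    exact ⟨hF _ ht, ⟨a, c, ht⟩, hT _ ht⟩
  set n := Fintype.card C with hn
  set m := M.ncard with hm
  have hmn : m ≤ n := by
    rw [hm, hn, ← Nat.card_eq_fintype_card]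
    exact Set.ncard_le_ncard (Set.subset_univ M) Set.finite_univ |>.trans_eq
      (by rw [Set.ncard_univ])
  have hcompl : Mᶜ.ncard = n - m := by
    have h := Set.ncard_add_ncard_compl M
    rw [Nat.card_eq_fintype_card] at h
    omega
  have hcard : P.A.ncard ≤ (n - m) * (m * (n - m)) := by
    calc P.A.ncard ≤ (Mᶜ ×ˢ (M ×ˢ Mᶜ)).ncard := Set.ncard_le_ncard hsub (Set.toFinite _)
    _ = (n - m) * (m * (n - m)) := by rw [ncard_prod_aux, ncard_prod_aux, hcompl]
  have hn1 : 1 ≤ n := Fintype.card_pos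
  have key : (27 : ℝ) * ((n : ℝ) - m) * (m : ℝ) * ((n : ℝ) - m) ≤ 4 * (n : ℝ) ^ 3 := by
    have hmr : (m : ℝ) ≤ n := by exact_mod_cast hmn
    have hm0 : (0 : ℝ) ≤ m := Nat.cast_nonneg m
    nlinarith [sq_nonneg ((n : ℝ) - m - 2 * m), sq_nonneg ((n : ℝ) - m), hm0, hmr]
  have hAr : (P.A.ncard : ℝ) ≤ ((n : ℝ) - m) * ((m : ℝ) * ((n : ℝ) - m)) := by
    have := hcard
    have hc : ((n - m : ℕ) : ℝ) = (n : ℝ) - m := by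
      rw [Nat.cast_sub hmn]
    calc (P.A.ncard : ℝ) ≤ ((n - m) * (m * (n - m)) : ℕ) := by exact_mod_cast hcard
    _ = ((n : ℝ) - m) * ((m : ℝ) * ((n : ℝ) - m)) := by push_cast [Nat.cast_sub hmn]; ring
  rw [Palette.density, div_le_iff₀ (by positivity)]
  calc (P.A.ncard : ℝ) ≤ ((n : ℝ) - m) * ((m : ℝ) * ((n : ℝ) - m)) := hAr
  _ ≤ 4 / 27 * (n : ℝ) ^ 3 := by nlinarith [key]
end

section
/- Let r ≥ 3 and let T_r be the transitive tournament on r vertices. Then every palette P with d(P) > ((r−2)/(r−1))² has either Q^L_{T_r} or Q^R_{T_r} as a subpalette. -/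
/-! ### Auxiliary development for STATEMENT 19 -/

set_option linter.unusedSectionVars false
set_option maxHeartbeats 1000000

open Finset
open scoped Classical

section Core
variable {V : Type} [Fintype V] [DecidableEq V]

/-- No chain (homomorphic copy of the transitive tournament `T_r`) inside `s`. -/
def CFOn (R : V → V → Prop) (r : ℕ) (s : Finset V) : Prop :=
  ¬ ∃ h : Fin r → V, (∀ i, h i ∈ s) ∧ ∀ i j : Fin r, i < j → R (h i) (h j)

noncomputable def outN (R : V → V → Prop) (s : Finset V) (x : V) : Finset V :=
  s.filter (fun y => R x y)

noncomputable def inN (R : V → V → Prop) (s : Finset V) (y : V) : Finset V :=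
  s.filter (fun x => R x y)

noncomputable def arcs (R : V → V → Prop) (s : Finset V) : ℕ :=
  ∑ x ∈ s, (outN R s x).card

lemma sum_card_filter_comm (R : V → V → Prop) (S T : Finset V) :
    ∑ x ∈ S, (T.filter (fun y => R x y)).card = ∑ y ∈ T, (S.filter (fun x => R x y)).card := by
  simp only [Finset.card_filter]
  exact Finset.sum_comm

lemma CFOn.not_self {R : V → V → Prop} {r : ℕ} {s : Finset V} (h : CFOn R r s) {x : V}
    (hx : x ∈ s) : ¬ R x x :=
  fun hR => h ⟨fun _ => x, fun _ => hx, fun _ _ _ => hR⟩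

lemma CFOn.mono {R : V → V → Prop} {r : ℕ} {s t : Finset V} (hts : t ⊆ s) (h : CFOn R r s) :
    CFOn R r t := by
  rintro ⟨f, hf, hc⟩
  exact h ⟨f, fun i => hts (hf i), hc⟩

lemma chain_snoc {k : ℕ} {R : V → V → Prop} {h : Fin k → V} {v : V}
    (hc : ∀ i j : Fin k, i < j → R (h i) (h j)) (hv : ∀ i, R (h i) v) :
    ∀ i j : Fin (k+1), i < j → R ((Fin.snoc h v : Fin (k+1) → V) i) ((Fin.snoc h v : Fin (k+1) → V) j) := by
  intro i j hij
  have hi : i ≠ Fin.last k := fun he => absurd (hij.trans_le (Fin.le_last j)) (by simp [he])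
  obtain ⟨i', rfl⟩ := Fin.exists_castSucc_eq.2 hi
  rcases Fin.eq_castSucc_or_eq_last j with ⟨j', rfl⟩ | rfl
  · simpa [Fin.snoc_castSucc] using hc i' j' (Fin.castSucc_lt_castSucc_iff.1 hij)
  · simpa [Fin.snoc_castSucc, Fin.snoc_last] using hv i'

lemma chain_cons {k : ℕ} {R : V → V → Prop} {h : Fin k → V} {v : V}
    (hc : ∀ i j : Fin k, i < j → R (h i) (h j)) (hv : ∀ i, R v (h i)) :
    ∀ i j : Fin (k+1), i < j → R ((Fin.cons v h : Fin (k+1) → V) i) ((Fin.cons v h : Fin (k+1) → V) j) := by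
  intro i j hij
  induction j using Fin.cases with
  | zero => simp at hij
  | succ j' =>
    induction i using Fin.cases with
    | zero => simpa using hv j'
    | succ i' => simpa using hc i' j' (Fin.succ_lt_succ_iff.1 hij)

lemma not_forall_out {k : ℕ} {R : V → V → Prop} {s : Finset V} (hcf : CFOn R (k+1) s)
    {h : Fin k → V} (hm : ∀ i, h i ∈ s) (hc : ∀ i j : Fin k, i < j → R (h i) (h j))
    {v : V} (hv : v ∈ s) : ¬ ∀ i, R (h i) v := by
  intro hall
  refine hcf ⟨Fin.snoc h v, ?_, chain_snoc hc hall⟩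
  intro i
  rcases Fin.eq_castSucc_or_eq_last i with ⟨i', rfl⟩ | rfl
  · simpa [Fin.snoc_castSucc] using hm i'
  · simpa [Fin.snoc_last] using hv

lemma not_forall_in {k : ℕ} {R : V → V → Prop} {s : Finset V} (hcf : CFOn R (k+1) s)
    {h : Fin k → V} (hm : ∀ i, h i ∈ s) (hc : ∀ i j : Fin k, i < j → R (h i) (h j))
    {v : V} (hv : v ∈ s) : ¬ ∀ i, R v (h i) := by
  intro hall
  refine hcf ⟨Fin.cons v h, ?_, chain_cons hc hall⟩
  intro i
  induction i using Fin.cases with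
  | zero => simpa using hv
  | succ i' => simpa using hm i'

end Core

section LemB

variable {V : Type} [Fintype V] [DecidableEq V]

lemma cross_le {j : ℕ} {R : V → V → Prop} {s : Finset V} (hcf : CFOn R (j+2) s)
    {h : Fin (j+1) → V} (hm : ∀ i, h i ∈ s) (hc : ∀ i1 i2 : Fin (j+1), i1 < i2 → R (h i1) (h i2))
    (hinj : Function.Injective h) {v : V} (hv : v ∈ s) :
    ((univ.image h).filter (fun u => R u v)).card
      + ((univ.image h).filter (fun u => R v u)).card ≤ 2 * j := by
  have hScard : (univ.image h).card = j + 1 := by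
    rw [Finset.card_image_of_injective _ hinj, card_univ, Fintype.card_fin]
  have h1 : ¬ ∀ i, R (h i) v := not_forall_out hcf hm hc hv
  have h2 : ¬ ∀ i, R v (h i) := not_forall_in hcf hm hc hv
  push_neg at h1 h2
  obtain ⟨i1, hi1⟩ := h1
  obtain ⟨i2, hi2⟩ := h2
  have c1 : ((univ.image h).filter (fun u => R u v)).card ≤ j := by
    have hsub : (univ.image h).filter (fun u => R u v) ⊆ (univ.image h).erase (h i1) := by
      intro u hu
      rw [mem_filter] at hu
      refine Finset.mem_erase.2 ⟨?_, hu.1⟩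
      rintro rfl; exact hi1 hu.2
    calc _ ≤ ((univ.image h).erase (h i1)).card := Finset.card_le_card hsub
      _ = j := by rw [Finset.card_erase_of_mem (mem_image_of_mem h (mem_univ i1)), hScard]; omega
  have c2 : ((univ.image h).filter (fun u => R v u)).card ≤ j := by
    have hsub : (univ.image h).filter (fun u => R v u) ⊆ (univ.image h).erase (h i2) := by
      intro u hu
      rw [mem_filter] at hu
      refine Finset.mem_erase.2 ⟨?_, hu.1⟩
      rintro rfl; exact hi2 hu.2
    calc _ ≤ ((univ.image h).erase (h i2)).card := Finset.card_le_card hsub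
      _ = j := by rw [Finset.card_erase_of_mem (mem_image_of_mem h (mem_univ i2)), hScard]; omega
  omega

lemma lemB_aux (R : V → V → Prop) :
    ∀ (M j : ℕ) (s : Finset V), j + s.card ≤ M → CFOn R (j+2) s →
      (j+1) * arcs R s ≤ j * s.card ^ 2 := by
  intro M
  induction M with
  | zero =>
    intro j s hM hcf
    have hs : s = ∅ := Finset.card_eq_zero.1 (by omega)
    subst hs
    simp [arcs]
  | succ M ih =>
    intro j s hM hcf
    by_cases hch : ∃ h : Fin (j+1) → V, (∀ i, h i ∈ s) ∧ ∀ i1 i2 : Fin (j+1), i1 < i2 → R (h i1) (h i2)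
    · -- a chain of length j+1 exists inside s
      obtain ⟨h, hm, hc⟩ := hch
      have hinj : Function.Injective h := by
        intro i1 i2 heq
        by_contra hne
        have hxx : R (h i1) (h i1) := by
          rcases Ne.lt_or_gt hne with hlt | hlt
          · have := hc i1 i2 hlt; rwa [← heq] at this
          · have := hc i2 i1 hlt; rwa [← heq] at this; 
        exact (CFOn.not_self hcf (hm i1)) hxx
      set S : Finset V := univ.image h with hS
      have hScard : S.card = j + 1 := by
        rw [hS, Finset.card_image_of_injective _ hinj, card_univ, Fintype.card_fin]
      have hSs : S ⊆ s := by
        intro u hu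
        obtain ⟨i, _, rfl⟩ := Finset.mem_image.1 hu
        exact hm i
      have hks : j + 1 ≤ s.card := hScard ▸ Finset.card_le_card hSs
      -- split arcs
      have hsplit : ∀ x : V, (outN R s x).card
          = (S.filter (fun y => R x y)).card + ((s \ S).filter (fun y => R x y)).card := by
        intro x
        have : outN R s x = (S.filter (fun y => R x y)) ∪ ((s \ S).filter (fun y => R x y)) := by
          ext u
          simp only [outN, mem_filter, mem_union, mem_sdiff]
          constructor
          · rintro ⟨hu, hR⟩
            by_cases huS : u ∈ S
            · exact Or.inl ⟨huS, hR⟩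
            · exact Or.inr ⟨⟨hu, huS⟩, hR⟩
          · rintro (⟨hu, hR⟩ | ⟨⟨hu, _⟩, hR⟩)
            · exact ⟨hSs hu, hR⟩
            · exact ⟨hu, hR⟩
        rw [this, Finset.card_union_of_disjoint]
        exact Finset.disjoint_filter_filter Finset.disjoint_sdiff
      have harcs : arcs R s = (∑ x ∈ S, (S.filter (fun y => R x y)).card)
          + (∑ x ∈ S, ((s \ S).filter (fun y => R x y)).card)
          + (∑ v ∈ s \ S, (S.filter (fun y => R v y)).card)
          + arcs R (s \ S) := by
        have e0 : arcs R s = ∑ x ∈ s \ S, (outN R s x).card + ∑ x ∈ S, (outN R s x).card :=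
          (Finset.sum_sdiff hSs).symm
        have e1 : arcs R (s \ S) = ∑ x ∈ s \ S, ((s \ S).filter (fun y => R x y)).card := by
          rfl
        simp only [e0, hsplit, Finset.sum_add_distrib, e1]
        ring
      -- bounds
      have b1 : ∑ x ∈ S, (S.filter (fun y => R x y)).card ≤ (j+1) * j := by
        have : ∀ x ∈ S, (S.filter (fun y => R x y)).card ≤ j := by
          intro x hx
          have hsub : S.filter (fun y => R x y) ⊆ S.erase x := by
            intro u hu
            rw [mem_filter] at hu
            refine Finset.mem_erase.2 ⟨?_, hu.1⟩
            rintro rfl; exact (CFOn.not_self hcf (hSs hx)) hu.2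
          calc _ ≤ (S.erase x).card := Finset.card_le_card hsub
            _ = j := by rw [Finset.card_erase_of_mem hx, hScard]; omega
        calc ∑ x ∈ S, (S.filter (fun y => R x y)).card ≤ ∑ _x ∈ S, j := Finset.sum_le_sum this
          _ = (j+1) * j := by rw [Finset.sum_const, smul_eq_mul, hScard]
      have btrans : ∑ x ∈ S, ((s \ S).filter (fun y => R x y)).card
          = ∑ v ∈ s \ S, (S.filter (fun x => R x v)).card := sum_card_filter_comm R S (s \ S)
      have b2 : ∑ v ∈ s \ S, ((S.filter (fun x => R x v)).card + (S.filter (fun y => R v y)).card)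
          ≤ (s.card - (j+1)) * (2 * j) := by
        have : ∀ v ∈ s \ S, (S.filter (fun x => R x v)).card + (S.filter (fun y => R v y)).card
            ≤ 2 * j := by
          intro v hv
          exact cross_le hcf hm hc hinj (Finset.mem_sdiff.1 hv).1
        calc _ ≤ ∑ _v ∈ s \ S, 2 * j := Finset.sum_le_sum this
          _ = (s.card - (j+1)) * (2*j) := by
              rw [Finset.sum_const, smul_eq_mul, Finset.card_sdiff_of_subset hSs, hScard]
      have hcard_sdiff : (s \ S).card = s.card - (j+1) := by
        rw [Finset.card_sdiff_of_subset hSs, hScard]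
      have hrec : (j+1) * arcs R (s \ S) ≤ j * (s.card - (j+1))^2 := by
        have := ih j (s \ S) (by rw [hcard_sdiff]; omega) (CFOn.mono (Finset.sdiff_subset) hcf)
        rwa [hcard_sdiff] at this
      -- arithmetic
      obtain ⟨d, hd⟩ : ∃ d, s.card = d + (j+1) := ⟨s.card - (j+1), by omega⟩
      rw [hd] at hrec ⊢
      have hd' : d + (j + 1) - (j+1) = d := by omega
      rw [hd'] at hrec
      have hb2' : ∑ v ∈ s \ S, (S.filter (fun x => R x v)).card
          + ∑ v ∈ s \ S, (S.filter (fun y => R v y)).card ≤ d * (2 * j) := by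
        rw [← Finset.sum_add_distrib]
        calc _ ≤ (s.card - (j+1)) * (2*j) := b2
          _ = d * (2*j) := by rw [hd, hd']
      rw [harcs, btrans]
      nlinarith [hrec, b1, hb2']
    · -- no chain of length j+1
      rcases Nat.eq_zero_or_pos j with rfl | hj
      · -- j = 0 : s must be empty
        have hs : s = ∅ := by
          by_contra hne
          obtain ⟨x, hx⟩ := Finset.nonempty_iff_ne_empty.2 hne
          exact hch ⟨fun _ => x, fun _ => hx, fun i1 i2 h12 => absurd h12 (by omega)⟩
        subst hs
        simp [arcs]
      · obtain ⟨i, rfl⟩ : ∃ i, j = i + 1 := ⟨j - 1, by omega⟩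
        have hcf' : CFOn R (i+2) s := hch
        have hih := ih i s (by omega) hcf'
        have key : (i+1) * ((i+2) * arcs R s) ≤ (i+1) * ((i+1) * s.card^2) := by
          calc (i+1) * ((i+2) * arcs R s) = (i+2) * ((i+1) * arcs R s) := by ring
            _ ≤ (i+2) * (i * s.card^2) := Nat.mul_le_mul_left _ hih
            _ ≤ (i+1) * ((i+1) * s.card^2) := by nlinarith
        exact Nat.le_of_mul_le_mul_left key (by omega)

lemma lemB (R : V → V → Prop) (j : ℕ) (s : Finset V) (hcf : CFOn R (j+2) s) :
    (j+1) * arcs R s ≤ j * s.card ^ 2 :=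
  lemB_aux R (j + s.card) j s le_rfl hcf

end LemB

section LemA
variable {V : Type} [Fintype V] [DecidableEq V]

lemma lemA (R : V → V → Prop) (j : ℕ) (hcf : CFOn R (j+3) (univ : Finset V)) :
    (j+2)^2 * (∑ y : V, (inN R univ y).card ^ 2) ≤ (j+1)^2 * (Fintype.card V)^3 := by
  set n := Fintype.card V with hn
  set d : V → ℕ := fun y => (inN R univ y).card with hd
  set p : V → ℕ := fun x => (outN R univ x).card with hp
  have hpn : ∀ x, p x ≤ n := fun x => by
    simpa [hn, hp, outN] using Finset.card_le_card (Finset.filter_subset _ (univ : Finset V))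
  -- step 1
  have step1 : ∑ y : V, d y ^ 2 = ∑ x : V, ∑ y ∈ outN R univ x, d y := by
    have e1 : ∀ y : V, d y ^ 2 = ∑ x : V, if R x y then d y else 0 := by
      intro y
      rw [pow_two]
      nth_rewrite 1 [hd]
      simp only [inN]
      rw [Finset.card_filter, Finset.sum_mul]
      congr 1
      ext x
      by_cases h : R x y <;> simp [h]
    calc ∑ y : V, d y ^ 2 = ∑ y : V, ∑ x : V, if R x y then d y else 0 :=
          Finset.sum_congr rfl (fun y _ => e1 y)
      _ = ∑ x : V, ∑ y : V, if R x y then d y else 0 := Finset.sum_comm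
      _ = ∑ x : V, ∑ y ∈ outN R univ x, d y := by
          refine Finset.sum_congr rfl (fun x _ => ?_)
          rw [outN, Finset.sum_filter]
  -- step 2
  have step2 : ∀ x : V, ∑ y ∈ outN R univ x, d y ≤ arcs R (outN R univ x) + p x * (n - p x) := by
    intro x
    have hper : ∀ y ∈ outN R univ x,
        d y ≤ ((outN R univ x).filter (fun u => R u y)).card + (n - p x) := by
      intro y _
      have hsub : (univ : Finset V).filter (fun u => R u y)
          ⊆ ((outN R univ x).filter (fun u => R u y)) ∪ (univ \ outN R univ x) := by
        intro u hu
        rw [mem_filter] at hu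
        by_cases huo : u ∈ outN R univ x
        · exact Finset.mem_union_left _ (mem_filter.2 ⟨huo, hu.2⟩)
        · exact Finset.mem_union_right _ (Finset.mem_sdiff.2 ⟨mem_univ u, huo⟩)
      calc d y ≤ (((outN R univ x).filter (fun u => R u y)) ∪ (univ \ outN R univ x)).card :=
            Finset.card_le_card hsub
        _ ≤ ((outN R univ x).filter (fun u => R u y)).card + (univ \ outN R univ x).card :=
            Finset.card_union_le _ _
        _ = ((outN R univ x).filter (fun u => R u y)).card + (n - p x) := by
            rw [Finset.card_sdiff_of_subset (Finset.subset_univ _), card_univ]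
    calc ∑ y ∈ outN R univ x, d y
        ≤ ∑ y ∈ outN R univ x, (((outN R univ x).filter (fun u => R u y)).card + (n - p x)) :=
          Finset.sum_le_sum hper
      _ = (∑ y ∈ outN R univ x, ((outN R univ x).filter (fun u => R u y)).card)
            + p x * (n - p x) := by
          rw [Finset.sum_add_distrib, Finset.sum_const, smul_eq_mul]
      _ = arcs R (outN R univ x) + p x * (n - p x) := by
          rw [← sum_card_filter_comm R (outN R univ x) (outN R univ x)]
          rfl
  -- step 3 : Turán bound inside out-neighborhoods
  have step3 : ∀ x : V, (j+1) * arcs R (outN R univ x) ≤ j * (p x)^2 := by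
    intro x
    have hcf' : CFOn R (j+2) (outN R univ x) := by
      rintro ⟨h, hm, hc⟩
      refine hcf ⟨Fin.cons x h, fun i => mem_univ _, chain_cons hc ?_⟩
      exact fun i => (mem_filter.1 (hm i)).2
    exact lemB R j (outN R univ x) hcf'
  -- step 4 : global Turán bound
  have step4 : (j+2) * arcs R univ ≤ (j+1) * n^2 := by
    have := lemB R (j+1) univ hcf
    simpa [hn, card_univ] using this
  -- pass to the reals
  have key : ∀ x : V, ((j:ℝ)+2)^2 * (((j:ℝ)+1) * (∑ y ∈ outN R univ x, d y : ℕ))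
      ≤ ((j:ℝ)+1)^2 * (n:ℝ)^2 + ((j:ℝ)+1) * j * ((j:ℝ)+2) * (n:ℝ) * (p x : ℝ) := by
    intro x
    have h2 : ((∑ y ∈ outN R univ x, d y : ℕ) : ℝ)
        ≤ (arcs R (outN R univ x) : ℝ) + (p x : ℝ) * ((n : ℝ) - (p x : ℝ)) := by
      have h := step2 x
      have hpx := hpn x
      have hcast : ((arcs R (outN R univ x) + p x * (n - p x) : ℕ) : ℝ)
          = (arcs R (outN R univ x) : ℝ) + (p x : ℝ) * ((n : ℝ) - (p x : ℝ)) := by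
        push_cast [Nat.cast_sub hpx]; ring
      calc ((∑ y ∈ outN R univ x, d y : ℕ) : ℝ)
          ≤ ((arcs R (outN R univ x) + p x * (n - p x) : ℕ) : ℝ) := by exact_mod_cast h
        _ = (arcs R (outN R univ x) : ℝ) + (p x : ℝ) * ((n : ℝ) - (p x : ℝ)) := hcast
    have h3 : ((j:ℝ)+1) * (arcs R (outN R univ x) : ℝ) ≤ (j:ℝ) * (p x : ℝ)^2 := by
      exact_mod_cast step3 x
    have hpx : (p x : ℝ) ≤ (n : ℝ) := by exact_mod_cast hpn x
    nlinarith [sq_nonneg (((j:ℝ)+1) * (n:ℝ) - ((j:ℝ)+2) * (p x : ℝ)),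
      mul_le_mul_of_nonneg_left h2 (by positivity : (0:ℝ) ≤ ((j:ℝ)+2)^2 * ((j:ℝ)+1)),
      mul_le_mul_of_nonneg_left h3 (by positivity : (0:ℝ) ≤ ((j:ℝ)+2)^2),
      (by positivity : (0:ℝ) ≤ ((p x : ℕ) : ℝ)),
      (by positivity : (0:ℝ) ≤ ((arcs R (outN R univ x) : ℕ) : ℝ))]
  -- sum up
  have harcs_univ : ∑ x : V, p x = arcs R univ := rfl
  have sum_key : ((j:ℝ)+2)^2 * (((j:ℝ)+1) * (∑ y : V, d y ^ 2 : ℕ))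
      ≤ (n:ℝ) * (((j:ℝ)+1)^2 * (n:ℝ)^2) + ((j:ℝ)+1) * j * ((j:ℝ)+2) * (n:ℝ) * (arcs R univ : ℝ) := by
    rw [step1]
    push_cast
    calc ((j:ℝ)+2)^2 * (((j:ℝ)+1) * (∑ x : V, ((∑ y ∈ outN R univ x, (d y : ℝ)))))
        = ∑ x : V, ((j:ℝ)+2)^2 * (((j:ℝ)+1) * (∑ y ∈ outN R univ x, (d y : ℝ))) := by
          rw [Finset.mul_sum, Finset.mul_sum]
      _ ≤ ∑ x : V, (((j:ℝ)+1)^2 * (n:ℝ)^2 + ((j:ℝ)+1) * j * ((j:ℝ)+2) * (n:ℝ) * (p x : ℝ)) := by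
          refine Finset.sum_le_sum (fun x _ => ?_)
          have := key x
          push_cast at this
          exact this
      _ = (n:ℝ) * (((j:ℝ)+1)^2 * (n:ℝ)^2)
            + ((j:ℝ)+1) * j * ((j:ℝ)+2) * (n:ℝ) * ((∑ x : V, (p x : ℝ))) := by
          rw [Finset.sum_add_distrib, Finset.sum_const, ← Finset.mul_sum, card_univ]
          push_cast [hn]
          ring
      _ = (n:ℝ) * (((j:ℝ)+1)^2 * (n:ℝ)^2) + ((j:ℝ)+1) * j * ((j:ℝ)+2) * (n:ℝ) * (arcs R univ : ℝ) := by
          rw [← harcs_univ]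
          push_cast
          ring
  -- finish
  have h4 : ((j:ℝ)+2) * (arcs R univ : ℝ) ≤ ((j:ℝ)+1) * (n:ℝ)^2 := by exact_mod_cast step4
  have hfin : ((j:ℝ)+1) * (((j:ℝ)+2)^2 * (∑ y : V, d y ^ 2 : ℕ))
      ≤ ((j:ℝ)+1) * (((j:ℝ)+1)^2 * (n:ℝ)^3) := by
    nlinarith [sum_key, h4, (by positivity : (0:ℝ) ≤ ((n:ℕ):ℝ)),
      mul_le_mul_of_nonneg_left h4 (by positivity : (0:ℝ) ≤ ((j:ℝ)+1) * j * (n:ℝ))]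
  have hfin2 : ((j:ℝ)+2)^2 * (∑ y : V, d y ^ 2 : ℕ) ≤ ((j:ℝ)+1)^2 * (n:ℝ)^3 :=
    le_of_mul_le_mul_left hfin (by positivity)
  exact_mod_cast hfin2

end LemA



/-- for `r ≥ 3` and the transitive tournament `T_r`, every palette
`P` with `d(P) > ((r−2)/(r−1))²` has `Q^L_{T_r}` or `Q^R_{T_r}` as a subpalette. -/
theorem stmt19 (r : ℕ) (hr : 3 ≤ r) (C : Type) [Fintype C] [Nonempty C]
    (P : Palette C)
    (hP : (((r : ℝ) - 2) / ((r : ℝ) - 1)) ^ 2 < P.density) :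
    Subpalette (leftPalette (transTournament r)) P ∨
    Subpalette (rightPalette (transTournament r)) P := by
  classical
  by_contra hcon
  push_neg at hcon
  obtain ⟨hL, hR⟩ := hcon
  obtain ⟨j, rfl⟩ : ∃ j, r = j + 3 := ⟨r - 3, by omega⟩
  set n := Fintype.card C with hn
  -- the two derived relations
  have hcf1 : CFOn (fun x y => ∃ z, (x, y, z) ∈ P.A) (j+3) (univ : Finset C) := by
    rintro ⟨h, -, hc⟩
    apply hL
    refine ⟨Sum.elim h (fun q => if hq : q.1 < q.2 then (hc q.1 q.2 hq).choose else h 0), ?_⟩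
    rintro t ⟨a, b, hab, rfl⟩
    have hab' : a < b := hab
    simp only [Sum.elim_inl, Sum.elim_inr]
    rw [dif_pos hab']
    exact (hc a b hab').choose_spec
  have hcf2 : CFOn (fun z y => ∃ x, (x, y, z) ∈ P.A) (j+3) (univ : Finset C) := by
    rintro ⟨h, -, hc⟩
    apply hR
    have hgc : ∀ a b : Fin (j+3), a < b → ∃ x, (x, h (Fin.rev a), h (Fin.rev b)) ∈ P.A := by
      intro a b hab
      exact hc (Fin.rev b) (Fin.rev a) (Fin.rev_lt_rev.2 hab)
    refine ⟨Sum.elim (fun i => h (Fin.rev i))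
      (fun q => if hq : q.1 < q.2 then (hgc q.1 q.2 hq).choose else h 0), ?_⟩
    rintro t ⟨a, b, hab, rfl⟩
    have hab' : a < b := hab
    simp only [Sum.elim_inl, Sum.elim_inr]
    rw [dif_pos hab']
    exact (hgc a b hab').choose_spec
  -- counting
  set a : C → ℕ := fun y => (inN (fun x y => ∃ z, (x, y, z) ∈ P.A) univ y).card with ha
  set b : C → ℕ := fun y => (inN (fun z y => ∃ x, (x, y, z) ∈ P.A) univ y).card with hb
  set Bfin : Finset (C × C × C) :=
    univ.filter (fun t => (∃ z, (t.1, t.2.1, z) ∈ P.A) ∧ (∃ x, (x, t.2.1, t.2.2) ∈ P.A)) with hBf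
  have hsub : P.A ⊆ (Bfin : Set (C × C × C)) := by
    intro t ht
    simp only [hBf, Finset.coe_filter, Set.mem_setOf_eq, mem_univ, true_and]
    exact ⟨⟨t.2.2, ht⟩, ⟨t.1, ht⟩⟩
  have hNle : P.A.ncard ≤ Bfin.card := by
    calc P.A.ncard ≤ (Bfin : Set (C × C × C)).ncard := Set.ncard_le_ncard hsub (Set.toFinite _)
      _ = Bfin.card := Set.ncard_coe_finset _
  have hcard : Bfin.card = ∑ y : C, a y * b y := by
    rw [hBf, Finset.card_filter]
    rw [Fintype.sum_prod_type]
    simp only [Fintype.sum_prod_type]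
    rw [Finset.sum_comm]
    refine Finset.sum_congr rfl (fun y _ => ?_)
    rw [ha, hb]
    simp only [inN]
    rw [Finset.card_filter, Finset.card_filter, Finset.sum_mul_sum]
    refine Finset.sum_congr rfl fun x _ => Finset.sum_congr rfl fun z _ => ?_
    by_cases h1 : ∃ z', (x, y, z') ∈ P.A <;> by_cases h2 : ∃ w, (w, y, z) ∈ P.A <;>
      simp [h1, h2]
  -- Turán-type bounds
  have hA1 := lemA (fun x y => ∃ z, (x, y, z) ∈ P.A) j hcf1
  have hA2 := lemA (fun z y => ∃ x, (x, y, z) ∈ P.A) j hcf2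
  have hA1n : (j+2)^2 * (∑ y : C, a y ^ 2) ≤ (j+1)^2 * n^3 := hA1
  have hA2n : (j+2)^2 * (∑ y : C, b y ^ 2) ≤ (j+1)^2 * n^3 := hA2
  clear_value a b n Bfin
  -- to the reals
  have hn0 : 0 < (n : ℝ) := by
    have : 0 < n := by rw [hn]; exact Fintype.card_pos
    exact_mod_cast this
  have hA1' : ((j:ℝ)+2)^2 * (∑ y : C, (a y : ℝ)^2) ≤ ((j:ℝ)+1)^2 * (n:ℝ)^3 := by
    have h' : (((j+2)^2 * (∑ y : C, a y ^ 2) : ℕ) : ℝ) ≤ (((j+1)^2 * n^3 : ℕ) : ℝ) := by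
      exact_mod_cast hA1n
    push_cast at h'
    exact h'
  have hA2' : ((j:ℝ)+2)^2 * (∑ y : C, (b y : ℝ)^2) ≤ ((j:ℝ)+1)^2 * (n:ℝ)^3 := by
    have h' : (((j+2)^2 * (∑ y : C, b y ^ 2) : ℕ) : ℝ) ≤ (((j+1)^2 * n^3 : ℕ) : ℝ) := by
      exact_mod_cast hA2n
    push_cast at h'
    exact h'
  have hCS := Finset.sum_mul_sq_le_sq_mul_sq univ (fun y : C => (a y : ℝ)) (fun y : C => (b y : ℝ))
  have hSab : (0:ℝ) ≤ ∑ y : C, (a y : ℝ) * (b y : ℝ) :=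
    Finset.sum_nonneg fun y _ => by positivity
  have hmain : ((j:ℝ)+2)^2 * (∑ y : C, (a y : ℝ) * (b y : ℝ)) ≤ ((j:ℝ)+1)^2 * (n:ℝ)^3 := by
    have hsq : (((j:ℝ)+2)^2 * (∑ y : C, (a y : ℝ) * (b y : ℝ)))^2
        ≤ (((j:ℝ)+1)^2 * (n:ℝ)^3)^2 := by
      have e1 : (((j:ℝ)+2)^2 * (∑ y : C, (a y : ℝ) * (b y : ℝ)))^2
          = (((j:ℝ)+2)^2)^2 * (∑ y : C, (a y : ℝ) * (b y : ℝ))^2 := by ring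
      have h2 : (((j:ℝ)+2)^2)^2 * (∑ y : C, (a y : ℝ) * (b y : ℝ))^2
          ≤ (((j:ℝ)+2)^2 * (∑ y : C, (a y : ℝ)^2)) * (((j:ℝ)+2)^2 * (∑ y : C, (b y : ℝ)^2)) := by
        calc (((j:ℝ)+2)^2)^2 * (∑ y : C, (a y : ℝ) * (b y : ℝ))^2
            ≤ (((j:ℝ)+2)^2)^2 * ((∑ y : C, (a y : ℝ)^2) * (∑ y : C, (b y : ℝ)^2)) :=
              mul_le_mul_of_nonneg_left hCS (by positivity)
          _ = (((j:ℝ)+2)^2 * (∑ y : C, (a y : ℝ)^2)) * (((j:ℝ)+2)^2 * (∑ y : C, (b y : ℝ)^2)) := by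
              ring
      have h3 : (((j:ℝ)+2)^2 * (∑ y : C, (a y : ℝ)^2)) * (((j:ℝ)+2)^2 * (∑ y : C, (b y : ℝ)^2))
          ≤ (((j:ℝ)+1)^2 * (n:ℝ)^3)^2 := by
        have p1 : (0:ℝ) ≤ ((j:ℝ)+2)^2 * (∑ y : C, (a y : ℝ)^2) := by positivity
        have p2 : (0:ℝ) ≤ ((j:ℝ)+2)^2 * (∑ y : C, (b y : ℝ)^2) := by positivity
        have p3 : (0:ℝ) ≤ ((j:ℝ)+1)^2 * (n:ℝ)^3 := by positivity
        calc _ ≤ (((j:ℝ)+1)^2 * (n:ℝ)^3) * (((j:ℝ)+2)^2 * (∑ y : C, (b y : ℝ)^2)) :=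
              mul_le_mul_of_nonneg_right hA1' p2
          _ ≤ (((j:ℝ)+1)^2 * (n:ℝ)^3) * (((j:ℝ)+1)^2 * (n:ℝ)^3) :=
              mul_le_mul_of_nonneg_left hA2' p3
          _ = (((j:ℝ)+1)^2 * (n:ℝ)^3)^2 := by ring
      calc _ = (((j:ℝ)+2)^2)^2 * (∑ y : C, (a y : ℝ) * (b y : ℝ))^2 := e1
        _ ≤ _ := le_trans h2 h3
    have hx : (0:ℝ) ≤ ((j:ℝ)+2)^2 * (∑ y : C, (a y : ℝ) * (b y : ℝ)) := by positivity
    have hy : (0:ℝ) ≤ ((j:ℝ)+1)^2 * (n:ℝ)^3 := by positivity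
    exact (pow_le_pow_iff_left₀ hx hy (by norm_num)).1 hsq
  -- from the density hypothesis
  have hdens : ((j:ℝ)+1)^2 * (n:ℝ)^3 < ((j:ℝ)+2)^2 * (P.A.ncard : ℝ) := by
    have hP' := hP
    simp only [Palette.density, ← hn] at hP'
    have hje : (((j+3 : ℕ) : ℝ) - 2) = (j:ℝ)+1 := by push_cast; ring
    have hje' : (((j+3 : ℕ) : ℝ) - 1) = (j:ℝ)+2 := by push_cast; ring
    rw [hje, hje', div_pow, div_lt_div_iff₀ (by positivity) (by positivity)] at hP'
    nlinarith [hP']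
  -- contradiction
  have hNR : (P.A.ncard : ℝ) ≤ ∑ y : C, (a y : ℝ) * (b y : ℝ) := by
    have : P.A.ncard ≤ ∑ y : C, a y * b y := hcard ▸ hNle
    exact_mod_cast this
  nlinarith [hmain, hdens, hNR, sq_nonneg ((j:ℝ)+2)]
end
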